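/- arXiv:2005.12990 — 4 statements merged into one kernel-verified Lean document; each statement's English description precedes it below -/
import Mathlib

section
/- Let k and n be natural numbers with n ≥ 1, and let M be a k × k matrix with entries in ℤ[X] such that every diagonal entry satisfies M i i = X^n, and every off-diagonal entry M i j (i ≠ j) is either 0 or equal to X^r for some natural number r < n. Then det M ≠ 0 in ℤ[X]. -/
/-!
In the Leibniz expansion of `det M`, the identity permutation contributes the monic polynomial
`∏ i, M i i` of degree `k * n`. Every other permutation moves some index, so its term contains an
off-diagonal factor of degree `< n` and has degree `< k * n`. Hence `det M` is monic.
-/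

open Polynomial Finset

namespace Polynomial

variable {R ι : Type*} [CommSemiring R] [DecidableEq ι]

theorem degree_prod_lt_card_mul {s : Finset ι} {f : ι → R[X]} {d : ℕ} {i : ι} (hi : i ∈ s)
    (hle : ∀ j ∈ s, (f j).degree ≤ d) (hlt : (f i).degree < d) :
    (∏ j ∈ s, f j).degree < (#s * d : ℕ) := by
  have hrest : (∏ j ∈ s.erase i, f j).degree ≤ (#(s.erase i) * d : ℕ) :=
    calc (∏ j ∈ s.erase i, f j).degree
        ≤ ∑ j ∈ s.erase i, (f j).degree := degree_prod_le _ _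
      _ ≤ ∑ _j ∈ s.erase i, (d : WithBot ℕ) := sum_le_sum fun j hj => hle j (mem_of_mem_erase hj)
      _ = (#(s.erase i) * d : ℕ) := by simp
  have hcard : #s * d = d + #(s.erase i) * d := by rw [← card_erase_add_one hi]; ring
  rw [← mul_prod_erase s f hi, hcard, Nat.cast_add]
  refine (degree_mul_le _ _).trans_lt ?_
  rcases eq_bot_or_bot_lt (∏ j ∈ s.erase i, f j).degree with hbot | hpos
  · rw [hbot, WithBot.add_bot]
    exact WithBot.bot_lt_coe _
  · exact WithBot.add_lt_add_of_lt_of_le hpos.ne' hlt hrest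

end Polynomial

namespace Matrix

variable {R n : Type*} [CommRing R] [Fintype n] [DecidableEq n]

theorem degree_det_sub_prod_diag_lt (M : Matrix n n R[X]) {d : ℕ}
    (hdiag : ∀ i, (M i i).degree ≤ d) (hoff : ∀ i j, i ≠ j → (M i j).degree < d) :
    (M.det - ∏ i, M i i).degree < (Fintype.card n * d : ℕ) := by
  have hle : ∀ i j, (M i j).degree ≤ d := fun i j => by
    obtain rfl | hij := eq_or_ne i j
    exacts [hdiag i, (hoff i j hij).le]
  rw [det_apply, ← insert_erase (mem_univ 1), sum_insert (notMem_erase _ _)]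
  simp only [Equiv.Perm.sign_one, one_smul, Equiv.Perm.one_apply, add_sub_cancel_left]
  refine (degree_sum_le _ _).trans_lt ((Finset.sup_lt_iff (WithBot.bot_lt_coe _)).2 fun σ hσ => ?_)
  obtain ⟨i, hi⟩ : ∃ i, σ i ≠ i := by
    by_contra! h
    exact ne_of_mem_erase hσ (Equiv.ext h)
  exact (degree_smul_le _ _).trans_lt <|
    degree_prod_lt_card_mul (mem_univ i) (fun j _ => hle _ _) (hoff _ _ hi)

theorem monic_det_of_diag_monic [Nontrivial R] (M : Matrix n n R[X]) {d : ℕ}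
    (hmonic : ∀ i, (M i i).Monic) (hdeg : ∀ i, (M i i).natDegree = d)
    (hoff : ∀ i j, i ≠ j → (M i j).degree < d) :
    M.det.Monic := by
  have hprod : (∏ i, M i i).Monic := monic_prod_of_monic _ _ fun i _ => hmonic i
  have hprod_deg : (∏ i, M i i).degree = (Fintype.card n * d : ℕ) := by
    rw [degree_eq_natDegree hprod.ne_zero, natDegree_prod_of_monic _ _ fun i _ => hmonic i]
    simp [hdeg]
  rw [← add_sub_cancel (∏ i, M i i) M.det]
  refine hprod.add_of_left (hprod_deg ▸ M.degree_det_sub_prod_diag_lt (fun i => ?_) hoff)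
  exact (degree_le_natDegree).trans_eq (congrArg _ (hdeg i))

end Matrix

theorem det_ne_zero_of_diag_pow_of_offDiag_zero_or_pow_lt_general
    (k n : ℕ)
    (M : Matrix (Fin k) (Fin k) ℤ[X])
    (hdiag : ∀ i, M i i = X ^ n)
    (hoff : ∀ i j, i ≠ j → M i j = 0 ∨ ∃ r : ℕ, r < n ∧ M i j = X ^ r) :
    M.det ≠ 0 := by
  refine (M.monic_det_of_diag_monic (d := n) (fun i => hdiag i ▸ monic_X_pow n)
    (fun i => by rw [hdiag, natDegree_X_pow]) fun i j hij => ?_).ne_zero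
  obtain hzero | ⟨r, hr, hpow⟩ := hoff i j hij
  · rw [hzero, degree_zero]
    exact WithBot.bot_lt_coe n
  · rw [hpow, degree_X_pow]
    exact_mod_cast hr

/-- If `M` is a `k × k` matrix over `ℤ[X]` whose diagonal entries are
all `X^n` (`n ≥ 1`) and whose off-diagonal entries are each `0` or `X^r` for some
`r < n`, then `det M ≠ 0`. -/
theorem det_ne_zero_of_diag_pow_of_offDiag_zero_or_pow_lt
    (k n : ℕ) (hn : 1 ≤ n)
    (M : Matrix (Fin k) (Fin k) ℤ[X])
    (hdiag : ∀ i, M i i = X ^ n)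
    (hoff : ∀ i j, i ≠ j → M i j = 0 ∨ ∃ r : ℕ, r < n ∧ M i j = X ^ r) :
    M.det ≠ 0 :=
  det_ne_zero_of_diag_pow_of_offDiag_zero_or_pow_lt_general k n M hdiag hoff
end

section
/- Let L = ℤ[z^{±1}, v^{±1}] be the Laurent polynomial ring in two variables over ℤ (realized as the group algebra of ℤ × ℤ over ℤ), and let φ : ℤ[Z, D, V, W] → L be the ring homomorphism from the polynomial ring in four variables over ℤ determined by φ(Z) = z, φ(V) = v, φ(W) = v⁻¹, and φ(D) = z⁻¹(v⁻¹ − v). Then the kernel of φ is exactly the ideal of ℤ[Z, D, V, W] generated by V·W − 1 and D·Z − (W − V). In particular, the ring Λ = ℤ[Z, D, V, W]/(V·W − 1, D·Z − (W − V)) embeds as a subring of ℤ[z^{±1}, v^{±1}]. -/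
/-!
Write `I` for the ideal `(VW - 1, DZ - (W - V))` and `Λ` for the quotient. `I ⊆ ker φ` is a direct
computation. Conversely, `Z` is a non-zero-divisor in `Λ`: eliminating `W = DZ + V` turns
`Z p ∈ I` into `Z p' = a (V(DZ + V) - 1)` in `ℤ[Z, D, V]`, and setting `Z = 0` shows `Z ∣ a`.
Hence `Λ` embeds in its localization `Λ[Z⁻¹]`. There `Z` and `V` are units, so
`ℤ[z^{±1}, v^{±1}] → Λ[Z⁻¹]`, `z ↦ Z`, `v ↦ V` is defined, and it sends `φ(p)` to the image of `p`;
so `φ(p) = 0` forces `p ∈ I`.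
-/

open MvPolynomial

/-- The Laurent polynomial ring `ℤ[z^{±1}, v^{±1}]`, realized as the group algebra of
`ℤ × ℤ` over `ℤ`; the exponent `(a, b)` corresponds to the monomial `z^a * v^b`. -/
abbrev LaurentZV : Type := AddMonoidAlgebra ℤ (ℤ × ℤ)

/-- The element `z` of `ℤ[z^{±1}, v^{±1}]`. -/
noncomputable def zL : LaurentZV := AddMonoidAlgebra.single (1, 0) 1
/-- The element `v` of `ℤ[z^{±1}, v^{±1}]`. -/
noncomputable def vL : LaurentZV := AddMonoidAlgebra.single (0, 1) 1
/-- The element `v⁻¹` of `ℤ[z^{±1}, v^{±1}]`. -/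
noncomputable def vinvL : LaurentZV := AddMonoidAlgebra.single (0, -1) 1
/-- The element `z⁻¹ * (v⁻¹ − v)` of `ℤ[z^{±1}, v^{±1}]`. -/
noncomputable def dL : LaurentZV :=
  AddMonoidAlgebra.single (-1, -1) 1 - AddMonoidAlgebra.single (-1, 1) 1

/-- The variable `Z` in `ℤ[Z, D, V, W]`. -/
noncomputable def ZZ : MvPolynomial (Fin 4) ℤ := X 0
/-- The variable `D` in `ℤ[Z, D, V, W]`. -/
noncomputable def DD : MvPolynomial (Fin 4) ℤ := X 1
/-- The variable `V` in `ℤ[Z, D, V, W]`. -/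
noncomputable def VV : MvPolynomial (Fin 4) ℤ := X 2
/-- The variable `W` in `ℤ[Z, D, V, W]`. -/
noncomputable def WW : MvPolynomial (Fin 4) ℤ := X 3

/-- The ring homomorphism `φ : ℤ[Z, D, V, W] → ℤ[z^{±1}, v^{±1}]` with `φ(Z) = z`,
`φ(D) = z⁻¹(v⁻¹ − v)`, `φ(V) = v` and `φ(W) = v⁻¹`. -/
noncomputable def phiL : MvPolynomial (Fin 4) ℤ →+* LaurentZV :=
  MvPolynomial.eval₂Hom (Int.castRingHom LaurentZV) ![zL, dL, vL, vinvL]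


noncomputable section

namespace MvPolynomial

variable {R σ : Type*} [CommRing R] [DecidableEq σ]

theorem sub_aeval_update_mem_span (i : σ) (q p : MvPolynomial σ R) :
    p - aeval (Function.update X i q) p ∈ Ideal.span {X i - q} := by
  induction p using MvPolynomial.induction_on with
  | C a => simp
  | add p p' hp hp' => simpa [add_sub_add_comm] using add_mem hp hp'
  | mul_X p j hp =>
    have hXj : X j - Function.update X i q j ∈ Ideal.span {X i - q} := by
      by_cases hji : j = i
      · subst hji
        simp
      · simp [Function.update_of_ne hji]
    have hsplit : p * X j - aeval (Function.update X i q) (p * X j) =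
        (p - aeval (Function.update X i q) p) * X j +
          aeval (Function.update X i q) p * (X j - Function.update X i q j) := by
      rw [map_mul, aeval_X]
      ring
    rw [hsplit]
    exact add_mem (Ideal.mul_mem_right _ _ hp) (Ideal.mul_mem_left _ _ hXj)

theorem X_dvd_of_aeval_update_zero {i : σ} {p : MvPolynomial σ R}
    (h : aeval (Function.update (X (R := R)) i 0) p = 0) : X i ∣ p := by
  have := sub_aeval_update_mem_span i 0 p
  rwa [h, sub_zero, sub_zero, Ideal.mem_span_singleton] at this

end MvPolynomial

def laurentLift {S : Type*} [CommRing S] (u w : Sˣ) : LaurentZV →+* S :=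
  (AddMonoidAlgebra.lift ℤ S (ℤ × ℤ) ((Units.coeHom S).comp
    ((MonoidHom.coprod (zpowersHom Sˣ u) (zpowersHom Sˣ w)).comp
      (MulEquiv.prodMultiplicative ℤ ℤ).toMonoidHom))).toRingHom

theorem laurentLift_single {S : Type*} [CommRing S] (u w : Sˣ) (a : ℤ × ℤ) :
    laurentLift u w (AddMonoidAlgebra.single a 1) = ((u ^ a.1 * w ^ a.2 : Sˣ) : S) := by
  simp [laurentLift]

abbrev relIdeal : Ideal (MvPolynomial (Fin 4) ℤ) :=
  Ideal.span {VV * WW - 1, DD * ZZ - (WW - VV)}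

abbrev Λ : Type := MvPolynomial (Fin 4) ℤ ⧸ relIdeal

theorem relIdeal_le_ker_phiL : relIdeal ≤ RingHom.ker phiL := by
  rw [Ideal.span_le]
  rintro x (rfl | rfl) <;>
    simp [phiL, VV, WW, DD, ZZ, vL, vinvL, dL, zL, sub_mul, AddMonoidAlgebra.single_mul_single,
      ← Prod.zero_eq_mk, ← AddMonoidAlgebra.one_def]

theorem mem_relIdeal_of_Z_mul_mem {p : MvPolynomial (Fin 4) ℤ} (h : ZZ * p ∈ relIdeal) :
    p ∈ relIdeal := by
  set elimW := aeval (R := ℤ) (Function.update X 3 (DD * ZZ + VV))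
  obtain ⟨a, b, hab⟩ := Ideal.mem_span_pair.1 h
  have hZ : ZZ * elimW p = elimW a * (VV * (DD * ZZ + VV) - 1) := by
    have := congrArg elimW hab
    simp [elimW, ZZ, DD, VV, WW, Function.update] at this ⊢
    linear_combination -this
  obtain ⟨r, hr⟩ : ZZ ∣ elimW a := by
    refine X_dvd_of_aeval_update_zero (R := ℤ) (i := 0) ?_
    have := congrArg (aeval (Function.update (X : Fin 4 → MvPolynomial (Fin 4) ℤ) 0 0)) hZ
    simp [ZZ, DD, VV, Function.update] at this
    have hV : (X 2 * X 2 - 1 : MvPolynomial (Fin 4) ℤ) ≠ 0 := fun h0 => by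
      simpa using congrArg (eval 0) h0
    exact this.resolve_right hV
  have hp : elimW p = r * (VV * (DD * ZZ + VV) - 1) :=
    mul_left_cancel₀ (show ZZ ≠ 0 from X_ne_zero 0) (by rw [hZ, hr]; ring)
  have hW : p - elimW p ∈ relIdeal := by
    refine (Ideal.span_singleton_le_iff_mem _).2 ?_ (sub_aeval_update_mem_span 3 _ p)
    rw [show X 3 - (DD * ZZ + VV) = -(DD * ZZ - (WW - VV)) by rw [WW]; ring]
    exact neg_mem (Ideal.subset_span (by simp))
  have hf : VV * (DD * ZZ + VV) - 1 ∈ relIdeal := Ideal.mem_span_pair.2 ⟨1, VV, by ring⟩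
  simpa using add_mem hW (hp ▸ Ideal.mul_mem_left _ r hf : elimW p ∈ relIdeal)

theorem mk_Z_mem_nonZeroDivisors : Ideal.Quotient.mk relIdeal ZZ ∈ nonZeroDivisors Λ := by
  refine mem_nonZeroDivisors_iff_left.2 fun x hx => ?_
  obtain ⟨p, rfl⟩ := Ideal.Quotient.mk_surjective x
  rw [← map_mul, Ideal.Quotient.eq_zero_iff_mem] at hx
  exact Ideal.Quotient.eq_zero_iff_mem.2 (mem_relIdeal_of_Z_mul_mem hx)

theorem mk_V_mul_mk_W : Ideal.Quotient.mk relIdeal VV * Ideal.Quotient.mk relIdeal WW = 1 := by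
  rw [← map_mul, ← sub_eq_zero, ← map_one (Ideal.Quotient.mk relIdeal), ← map_sub,
    Ideal.Quotient.eq_zero_iff_mem]
  exact Ideal.subset_span (by simp)

theorem mk_D_mul_mk_Z : Ideal.Quotient.mk relIdeal DD * Ideal.Quotient.mk relIdeal ZZ =
    Ideal.Quotient.mk relIdeal WW - Ideal.Quotient.mk relIdeal VV := by
  rw [← map_mul, ← sub_eq_zero, ← map_sub, ← map_sub, Ideal.Quotient.eq_zero_iff_mem]
  exact Ideal.subset_span (by simp)

abbrev ΛZinv : Type := Localization.Away (Ideal.Quotient.mk relIdeal ZZ)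

def zUnit : ΛZinv ˣ :=
  (IsLocalization.Away.algebraMap_isUnit (Ideal.Quotient.mk relIdeal ZZ)).unit

def vUnit : ΛZinv ˣ :=
  Units.mkOfMulEqOne (algebraMap Λ ΛZinv (Ideal.Quotient.mk relIdeal VV))
    (algebraMap Λ ΛZinv (Ideal.Quotient.mk relIdeal WW))
    (by rw [← map_mul, mk_V_mul_mk_W, map_one])

theorem zUnit_val :
    (zUnit : ΛZinv) = algebraMap Λ ΛZinv (Ideal.Quotient.mk relIdeal ZZ) := IsUnit.unit_spec _

theorem vUnit_val :
    (vUnit : ΛZinv) = algebraMap Λ ΛZinv (Ideal.Quotient.mk relIdeal VV) := rfl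

theorem vUnit_inv_val :
    ((vUnit⁻¹ : ΛZinv ˣ) : ΛZinv) = algebraMap Λ ΛZinv (Ideal.Quotient.mk relIdeal WW) := rfl

theorem laurentLift_comp_phiL :
    (laurentLift zUnit vUnit).comp phiL =
      (algebraMap Λ ΛZinv).comp (Ideal.Quotient.mk relIdeal) := by
  refine MvPolynomial.ringHom_ext (fun r => by simp) fun i => ?_
  fin_cases i
  · simp [phiL, zL, laurentLift_single, zUnit_val, ZZ]
  · have hd := congrArg (algebraMap Λ ΛZinv) mk_D_mul_mk_Z
    rw [map_mul, map_sub] at hd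
    have hz := zUnit.inv_mul
    rw [zUnit_val] at hz
    rw [RingHom.comp_apply, phiL, eval₂Hom_X']
    show laurentLift zUnit vUnit dL = algebraMap Λ ΛZinv (Ideal.Quotient.mk relIdeal DD)
    simp only [dL, map_sub, laurentLift_single, zpow_neg, zpow_one, Units.val_mul, vUnit_val,
      vUnit_inv_val]
    linear_combination (-((zUnit⁻¹ : ΛZinv ˣ) : ΛZinv)) * hd +
      algebraMap Λ ΛZinv (Ideal.Quotient.mk relIdeal DD) * hz
  · simp [phiL, vL, laurentLift_single, vUnit_val, VV]
  · simp [phiL, vinvL, laurentLift_single, vUnit_inv_val, WW]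

end

/-- The kernel of `φ` is exactly the ideal generated by `V·W − 1` and
`D·Z − (W − V)`; in particular `Λ = ℤ[Z, D, V, W]/(V·W − 1, D·Z − (W − V))` embeds as a
subring of `ℤ[z^{±1}, v^{±1}]`. -/
theorem ker_phiL_eq_span :
    RingHom.ker phiL = Ideal.span {VV * WW - 1, DD * ZZ - (WW - VV)} ∧
    ∃ ι : (MvPolynomial (Fin 4) ℤ ⧸ Ideal.span {VV * WW - 1, DD * ZZ - (WW - VV)})
        →+* LaurentZV, Function.Injective ι := by
  have hker : RingHom.ker phiL = relIdeal := by
    refine le_antisymm (fun p hp => ?_) relIdeal_le_ker_phiL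
    have hloc : algebraMap Λ ΛZinv (Ideal.Quotient.mk relIdeal p) = 0 := by
      rw [← RingHom.comp_apply, ← laurentLift_comp_phiL, RingHom.comp_apply,
        RingHom.mem_ker.1 hp, map_zero]
    have hinj := IsLocalization.injective ΛZinv (Submonoid.powers_le.2 mk_Z_mem_nonZeroDivisors)
    exact Ideal.Quotient.eq_zero_iff_mem.1 ((injective_iff_map_eq_zero _).1 hinj _ hloc)
  exact ⟨hker, Ideal.Quotient.lift relIdeal phiL relIdeal_le_ker_phiL,
    RingHom.lift_injective_of_ker_le_ideal _ _ hker.le⟩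
end

section
/- Let S be a commutative ring, let π : S → ℤ[X] be a ring homomorphism, let k and n be natural numbers with n ≥ 1, and let M be a k × k matrix with entries in S such that π(M i i) = X^n for every diagonal entry, and for every off-diagonal entry (i ≠ j) either π(M i j) = 0 or π(M i j) = X^r for some natural number r < n. Then det M ≠ 0 in S. -/
open Polynomial

/-!
Evaluating `π M` at `X = k + 1` gives a real matrix with diagonal entries `(k + 1) ^ n` and
off-diagonal entries of absolute value at most `(k + 1) ^ n / (k + 1)`; the `k - 1` of them in a
row sum to less than the diagonal entry. By Gershgorin the determinant of this matrix, which is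
the image of `det M`, is nonzero.
-/

theorem Matrix.det_ne_zero_of_mul_norm_offDiag_le {K ι : Type*} [NormedField K] [Fintype ι]
    [DecidableEq ι] {A : Matrix ι ι K} {t d : ℝ} (ht : Fintype.card ι ≤ t) (hd : 0 < d)
    (hdiag : ∀ i, d ≤ ‖A i i‖) (hoff : ∀ i j, i ≠ j → t * ‖A i j‖ ≤ d) :
    A.det ≠ 0 := by
  refine det_ne_zero_of_sum_row_lt_diag fun i ↦ ?_
  have hcard : ((Finset.univ.erase i).card : ℝ) + 1 = Fintype.card ι := by
    exact_mod_cast Finset.card_erase_add_one (Finset.mem_univ i)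
  have hsum : t * ∑ j ∈ Finset.univ.erase i, ‖A i j‖ ≤ (t - 1) * d :=
    calc t * ∑ j ∈ Finset.univ.erase i, ‖A i j‖
        = ∑ j ∈ Finset.univ.erase i, t * ‖A i j‖ := Finset.mul_sum _ _ _
      _ ≤ ∑ _j ∈ Finset.univ.erase i, d :=
          Finset.sum_le_sum fun j hj ↦ hoff i j (Finset.ne_of_mem_erase hj).symm
      _ = (Finset.univ.erase i).card * d := by rw [Finset.sum_const, nsmul_eq_mul]
      _ ≤ (t - 1) * d := by gcongr; linarith
  have ht0 : 0 < t := lt_of_lt_of_le (by exact_mod_cast Fintype.card_pos_iff.mpr ⟨i⟩) ht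
  have hlt : ∑ j ∈ Finset.univ.erase i, ‖A i j‖ < d :=
    lt_of_mul_lt_mul_left (by linarith) ht0.le
  exact hlt.trans_le (hdiag i)

theorem Polynomial.mul_abs_aeval_le_pow {p : ℤ[X]} {n : ℕ} {t : ℝ} (ht : 1 ≤ t)
    (hp : p = 0 ∨ ∃ r < n, p = X ^ r) : t * |aeval t p| ≤ t ^ n := by
  rcases hp with rfl | ⟨r, hr, rfl⟩
  · simp only [map_zero, abs_zero, mul_zero]
    positivity
  · rw [map_pow, aeval_X, abs_of_nonneg (by positivity), ← pow_succ']
    exact pow_le_pow_right₀ ht hr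

theorem det_ne_zero_of_ringHom_diag_pow_general
    (S : Type*) [CommRing S] (π : S →+* ℤ[X])
    (k n : ℕ)
    (M : Matrix (Fin k) (Fin k) S)
    (hdiag : ∀ i, π (M i i) = X ^ n)
    (hoff : ∀ i j, i ≠ j → π (M i j) = 0 ∨ ∃ r : ℕ, r < n ∧ π (M i j) = X ^ r) :
    M.det ≠ 0 := by
  set t : ℝ := k + 1
  have ht : 1 ≤ t := le_add_of_nonneg_left k.cast_nonneg
  set φ : S →+* ℝ := (aeval t).toRingHom.comp π
  intro hM
  have hdet : (φ.mapMatrix M).det = 0 := by rw [← RingHom.map_det, hM, map_zero]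
  refine Matrix.det_ne_zero_of_mul_norm_offDiag_le (t := t) (d := t ^ n) ?_ (by positivity)
    (fun i ↦ ?_) (fun i j hij ↦ ?_) hdet
  · simp [t]
  · simp [φ, hdiag, abs_of_nonneg (zero_le_one.trans ht)]
  · exact mul_abs_aeval_le_pow ht (hoff i j hij)

/-- Let `S` be a commutative ring and `π : S → ℤ[X]` a ring
homomorphism.  If `M` is a `k × k` matrix over `S` with `π (M i i) = X^n` (`n ≥ 1`) on
the diagonal and, off the diagonal, each `π (M i j)` equal to `0` or to `X^r` with
`r < n`, then `det M ≠ 0` in `S`. -/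
theorem det_ne_zero_of_ringHom_diag_pow
    (S : Type*) [CommRing S] (π : S →+* ℤ[X])
    (k n : ℕ) (hn : 1 ≤ n)
    (M : Matrix (Fin k) (Fin k) S)
    (hdiag : ∀ i, π (M i i) = X ^ n)
    (hoff : ∀ i j, i ≠ j → π (M i j) = 0 ∨ ∃ r : ℕ, r < n ∧ π (M i j) = X ^ r) :
    M.det ≠ 0 :=
  det_ne_zero_of_ringHom_diag_pow_general S π k n M hdiag hoff
end

section
/- Let R be an integral domain, let M be an R-module, let k and n be natural numbers with n ≥ 1, let v : Fin k → M be a family of elements of M, let φ : Fin k → (M →ₗ[R] R) be a family of R-linear functionals, and let π : R → ℤ[X] be a ring homomorphism. Suppose that π(φ i (v i)) = X^n for every i, and that for all i ≠ j either π(φ j (v i)) = 0 or π(φ j (v i)) = X^r for some natural number r < n. Then the family v is linearly independent over R. -/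
open Polynomial

/-!
Apply `π` entrywise to the pairing matrix `A j i = φ j (v i)`. In the determinant of the image
only the identity permutation reaches degree `n k`, every other permutation picking up an
off-diagonal factor of degree `< n`; so `π (det A)` has coefficient `1` in degree `n k`. Hence
`det A ≠ 0`, and over a domain the columns of `A`, which are the images of the `v i` under
`m ↦ (φ j m)_j`, are linearly independent.
-/

theorem linearIndependent_of_det_pairing_ne_zero {ι R M : Type*} [Fintype ι] [DecidableEq ι]
    [CommRing R] [IsDomain R] [AddCommGroup M] [Module R M] {v : ι → M}
    {φ : ι → Module.Dual R M} (h : (Matrix.of fun j i => φ j (v i)).det ≠ 0) :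
    LinearIndependent R v :=
  .of_comp (LinearMap.pi φ) (Matrix.linearIndependent_cols_of_det_ne_zero h)

namespace Matrix

variable {ι R : Type*} [Fintype ι] [DecidableEq ι] [CommRing R] {B : Matrix ι ι R[X]} {n : ℕ}

theorem coeff_prod_perm_eq_zero_of_degree_lt (hdiag : ∀ i, (B i i).natDegree ≤ n)
    (hoff : ∀ i j, i ≠ j → (B i j).degree < n) {σ : Equiv.Perm ι} (hσ : σ ≠ 1) :
    (∏ i, B (σ i) i).coeff (n * Fintype.card ι) = 0 := by
  rcases eq_or_ne (∏ i, B (σ i) i) 0 with hzero | hzero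
  · rw [hzero, coeff_zero]
  have hfactor : ∀ i, B (σ i) i ≠ 0 := fun i h =>
    hzero (Finset.prod_eq_zero (Finset.mem_univ i) h)
  have hle : ∀ i, (B (σ i) i).natDegree ≤ n := fun i => by
    by_cases h : σ i = i
    · rw [h]; exact hdiag i
    · exact ((natDegree_lt_iff_degree_lt (hfactor i)).2 (hoff _ _ h)).le
  obtain ⟨i₀, hi₀⟩ : ∃ i, σ i ≠ i := by
    by_contra! h
    exact hσ (Equiv.ext h)
  have hlt : (B (σ i₀) i₀).natDegree < n :=
    (natDegree_lt_iff_degree_lt (hfactor i₀)).2 (hoff _ _ hi₀)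
  apply coeff_eq_zero_of_natDegree_lt
  calc (∏ i, B (σ i) i).natDegree ≤ ∑ i, (B (σ i) i).natDegree := natDegree_prod_le _ _
    _ < ∑ _i : ι, n := Finset.sum_lt_sum (fun i _ => hle i) ⟨i₀, Finset.mem_univ _, hlt⟩
    _ = n * Fintype.card ι := by rw [Finset.sum_const, Finset.card_univ, smul_eq_mul, mul_comm]

theorem coeff_det_of_monic_diag_of_degree_lt (hmonic : ∀ i, (B i i).Monic)
    (hdiag : ∀ i, (B i i).natDegree = n) (hoff : ∀ i j, i ≠ j → (B i j).degree < n) :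
    B.det.coeff (n * Fintype.card ι) = 1 := by
  rw [det_apply, finsetSum_coeff, Finset.sum_eq_single_of_mem 1 (Finset.mem_univ _)
    fun σ _ hσ => by
      rw [coeff_smul, coeff_prod_perm_eq_zero_of_degree_lt (fun i => (hdiag i).le) hoff hσ,
        smul_zero]]
  have hprod : (∏ i, B i i).Monic := monic_prod_of_monic _ _ fun i _ => hmonic i
  have hdeg : (∏ i, B i i).natDegree = n * Fintype.card ι := by
    rw [natDegree_prod_of_monic _ _ fun i _ => hmonic i]
    simp [hdiag, mul_comm]
  simpa [← hdeg] using hprod.coeff_natDegree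

end Matrix

theorem linearIndependent_of_ringHom_pairing_diag_pow_general
    (R : Type*) [CommRing R] [IsDomain R]
    (M : Type*) [AddCommGroup M] [Module R M]
    (k n : ℕ)
    (v : Fin k → M) (φ : Fin k → (M →ₗ[R] R))
    (π : R →+* ℤ[X])
    (hdiag : ∀ i, π (φ i (v i)) = X ^ n)
    (hoff : ∀ i j, i ≠ j → π (φ j (v i)) = 0 ∨ ∃ r : ℕ, r < n ∧ π (φ j (v i)) = X ^ r) :
    LinearIndependent R v := by
  set A : Matrix (Fin k) (Fin k) R := Matrix.of fun j i => φ j (v i)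
  have hdiagB : ∀ i, π.mapMatrix A i i = X ^ n := hdiag
  have hdegree : ∀ j i, j ≠ i → (π.mapMatrix A j i).degree < n := fun j i hji => by
    rcases hoff i j hji.symm with h | ⟨r, hr, h⟩
    · exact (congrArg degree h).trans_lt (degree_zero.trans_lt (WithBot.bot_lt_coe n))
    · exact (congrArg degree h).trans_lt (by simpa using hr)
  have hcoeff := Matrix.coeff_det_of_monic_diag_of_degree_lt
    (fun i => hdiagB i ▸ monic_X_pow n) (fun i => hdiagB i ▸ natDegree_X_pow n) hdegree
  refine linearIndependent_of_det_pairing_ne_zero (φ := φ) fun hA => ?_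
  rw [← RingHom.map_det, show A.det = 0 from hA, map_zero, coeff_zero] at hcoeff
  exact zero_ne_one hcoeff

/-- Let `R` be an integral domain, `M` an `R`-module, `v : Fin k → M`
a family of elements, `φ : Fin k → (M →ₗ[R] R)` a family of linear functionals, and
`π : R → ℤ[X]` a ring homomorphism.  If `π (φ i (v i)) = X^n` (`n ≥ 1`) for every `i`,
and for `i ≠ j` each `π (φ j (v i))` is `0` or `X^r` with `r < n`, then the family `v`
is linearly independent over `R`. -/
theorem linearIndependent_of_ringHom_pairing_diag_pow
    (R : Type*) [CommRing R] [IsDomain R]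
    (M : Type*) [AddCommGroup M] [Module R M]
    (k n : ℕ) (hn : 1 ≤ n)
    (v : Fin k → M) (φ : Fin k → (M →ₗ[R] R))
    (π : R →+* ℤ[X])
    (hdiag : ∀ i, π (φ i (v i)) = X ^ n)
    (hoff : ∀ i j, i ≠ j → π (φ j (v i)) = 0 ∨ ∃ r : ℕ, r < n ∧ π (φ j (v i)) = X ^ r) :
    LinearIndependent R v :=
  linearIndependent_of_ringHom_pairing_diag_pow_general R M k n v φ π hdiag hoff
end
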